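/- arXiv:2001.07878 — 6 statements merged into one kernel-verified Lean document; each statement's English description precedes it below -/
import Mathlib

section
/- Let f: ℝⁿ → ℝ be a C² function with f_{x₁ x₂} ≤ 0 everywhere, and suppose f is symmetric in its arguments. Then for any real numbers a > b, f(a, b, …, b) + f(b, a, …, a) ≥ f(a, a, …, a) + f(b, b, …, b). -/
/-- Second partial derivative `f_{x_i x_j}` of a function on `Fin n → ℝ`. -/
noncomputable def secondPartial {n : ℕ} (f : (Fin n → ℝ) → ℝ) (i j : Fin n)
    (x : Fin n → ℝ) : ℝ :=
  fderiv ℝ (fun y => fderiv ℝ f y (Pi.single i 1)) x (Pi.single j 1)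

/-!
Restrict `f` to the plane `s • e₀ + t • (e₁ + ⋯ + e_{n-1})`, whose points are `(s, t, …, t)`. The
mixed derivative of this restriction is `∑_{j ≠ 0} f_{x₀ x_j}`, and each summand is a value of
`f_{x₀ x₁}` at a permuted point, hence nonpositive. A function of two variables with nonpositive
mixed derivative is submodular: `t ↦ g(a, t) - g(b, t)` is antitone for `b ≤ a`, and comparing
`t = a` with `t = b` is the claim.
-/

open Function Finset

section Submodular

variable {E : Type*} [NormedAddCommGroup E] [NormedSpace ℝ E] {f : E → ℝ} {u v : E}

theorem antitone_fderiv_apply_of_fderiv_fderiv_nonpos (hf' : Differentiable ℝ (fderiv ℝ f))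
    (h : ∀ x, fderiv ℝ (fderiv ℝ f) x u v ≤ 0) (t : ℝ) :
    Antitone fun s : ℝ => fderiv ℝ f (s • u + t • v) v := by
  have hline : ∀ s : ℝ, HasDerivAt (fun s : ℝ => s • u + t • v) u s := fun s => by
    simpa using ((hasDerivAt_id s).smul_const u).add_const (t • v)
  refine antitone_of_hasDerivAt_nonpos (fun s => ?_) fun s => h (s • u + t • v)
  simpa using ((hf' _).hasFDerivAt.comp_hasDerivAt s (hline s)).clm_apply (hasDerivAt_const s v)

theorem submodular_of_fderiv_fderiv_nonpos (hf : Differentiable ℝ f)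
    (hf' : Differentiable ℝ (fderiv ℝ f)) (h : ∀ x, fderiv ℝ (fderiv ℝ f) x u v ≤ 0)
    {s₁ s₂ t₁ t₂ : ℝ} (hs : s₁ ≤ s₂) (ht : t₁ ≤ t₂) :
    f (s₂ • u + t₂ • v) + f (s₁ • u + t₁ • v) ≤ f (s₂ • u + t₁ • v) + f (s₁ • u + t₂ • v) := by
  have hline : ∀ s t : ℝ, HasDerivAt (fun t : ℝ => s • u + t • v) v t := fun s t => by
    simpa using ((hasDerivAt_id t).smul_const v).const_add (s • u)
  have hslice (s t : ℝ) := (hf (s • u + t • v)).hasFDerivAt.comp_hasDerivAt t (hline s t)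
  have hdiff : Antitone fun t : ℝ => f (s₂ • u + t • v) - f (s₁ • u + t • v) :=
    antitone_of_hasDerivAt_nonpos (fun t => (hslice s₂ t).sub (hslice s₁ t)) fun t =>
      sub_nonpos.2 (antitone_fderiv_apply_of_fderiv_fderiv_nonpos hf' h t hs)
  linarith [hdiff ht]

end Submodular

theorem fderiv_fderiv_apply_eq_of_comp_eq {𝕜 E F : Type*} [NontriviallyNormedField 𝕜]
    [NormedAddCommGroup E] [NormedSpace 𝕜 E] [NormedAddCommGroup F] [NormedSpace 𝕜 F]
    {f : E → F} (hf : ContDiff 𝕜 2 f) (g : E →L[𝕜] E) (hfg : f ∘ g = f) (x u v : E) :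
    fderiv 𝕜 (fderiv 𝕜 f) x u v = fderiv 𝕜 (fderiv 𝕜 f) (g x) (g u) (g v) := by
  have h := g.iteratedFDeriv_comp_right hf x (i := 2) le_rfl
  rw [hfg] at h
  simpa [iteratedFDeriv_two_apply] using congr($h ![u, v])

section Coordinates

variable {n : ℕ} {f : (Fin n → ℝ) → ℝ}

theorem secondPartial_eq_fderiv_fderiv {x : Fin n → ℝ} (hf' : DifferentiableAt ℝ (fderiv ℝ f) x)
    (i j : Fin n) :
    secondPartial f i j x = fderiv ℝ (fderiv ℝ f) x (Pi.single j 1) (Pi.single i 1) := by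
  simp [secondPartial, fderiv_clm_apply hf' (differentiableAt_const _)]

theorem fderiv_fderiv_single_nonpos_of_perm_invariant (hf : ContDiff ℝ 2 f)
    (hsym : ∀ (σ : Equiv.Perm (Fin n)) (x : Fin n → ℝ), f (x ∘ σ) = f x) {i₀ i₁ : Fin n}
    (h₀₁ : i₀ ≠ i₁)
    (hneg : ∀ x, fderiv ℝ (fderiv ℝ f) x (Pi.single i₁ 1) (Pi.single i₀ 1) ≤ 0)
    {j : Fin n} (hj : j ≠ i₀) (x : Fin n → ℝ) :
    fderiv ℝ (fderiv ℝ f) x (Pi.single i₀ 1) (Pi.single j 1) ≤ 0 := by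
  -- `σ.symm` sends `i₀ ↦ i₁` and `j ↦ i₀`
  set σ := (Equiv.swap i₀ i₁ * Equiv.swap i₁ j).symm
  let g : (Fin n → ℝ) →L[ℝ] (Fin n → ℝ) := (LinearMap.funLeft ℝ ℝ σ).toContinuousLinearMap
  have hsingle : ∀ i, g (Pi.single i 1) = Pi.single (σ.symm i) 1 := fun i =>
    update_comp_equiv (0 : Fin n → ℝ) σ i 1
  rw [fderiv_fderiv_apply_eq_of_comp_eq hf g (funext fun y => hsym σ y), hsingle, hsingle]
  convert hneg (g x) using 3 <;> simp [σ, Equiv.swap_apply_of_ne_of_ne, h₀₁, hj.symm]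

theorem update_const_eq_smul_single_add_smul_sum (i : Fin n) (s t : ℝ) :
    update (fun _ => t) i s = s • Pi.single i 1 + t • ∑ j ∈ univ.erase i, Pi.single j 1 := by
  ext k
  by_cases hk : k = i <;> simp [hk, Finset.sum_apply, Pi.single_apply]

end Coordinates

/-- If `f` is `C²`, symmetric, with `f_{x₁x₂} ≤ 0` everywhere, then for `a > b`,
`f(a,b,…,b) + f(b,a,…,a) ≥ f(a,…,a) + f(b,…,b)`. -/
theorem stmt1 {n : ℕ} (hn : 2 ≤ n) (f : (Fin n → ℝ) → ℝ)
    (hf : ContDiff ℝ 2 f)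
    (hsym : ∀ (σ : Equiv.Perm (Fin n)) (x : Fin n → ℝ), f (x ∘ σ) = f x)
    (hconc : ∀ x : Fin n → ℝ, secondPartial f ⟨0, by omega⟩ ⟨1, by omega⟩ x ≤ 0)
    (a b : ℝ) (hab : b < a) :
    f (Function.update (fun _ => b) ⟨0, by omega⟩ a)
      + f (Function.update (fun _ => a) ⟨0, by omega⟩ b)
      ≥ f (fun _ => a) + f (fun _ => b) := by
  set i₀ : Fin n := ⟨0, by omega⟩
  have hf' : Differentiable ℝ (fderiv ℝ f) :=
    (hf.fderiv_right (m := 1) le_rfl).differentiable one_ne_zero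
  have hmixed (x : Fin n → ℝ) :
      fderiv ℝ (fderiv ℝ f) x (Pi.single i₀ 1) (∑ j ∈ univ.erase i₀, Pi.single j 1) ≤ 0 := by
    rw [map_sum]
    refine sum_nonpos fun j hj => fderiv_fderiv_single_nonpos_of_perm_invariant hf hsym
      (i₁ := ⟨1, by omega⟩) (by simp [i₀, Fin.ext_iff]) (fun y => ?_) (ne_of_mem_erase hj) x
    rw [← secondPartial_eq_fderiv_fderiv (hf' y)]
    exact hconc y
  have key := submodular_of_fderiv_fderiv_nonpos (hf.differentiable two_ne_zero) hf' hmixed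
    hab.le hab.le
  simp only [← update_const_eq_smul_single_add_smul_sum, update_eq_self] at key
  linarith
end

section
/- Let n > 1 and let a₀,…,aₙ, b₀,…,bₙ be strictly positive reals satisfying a_l/b_l < a_n/b_n, a_l < a_n, and b_l < b_n for all 0 ≤ l ≤ n−1. Let c₀,…,cₙ and c'₀,…,c'ₙ be nonnegative reals with c_l ≥ c'_l for all 0 ≤ l ≤ n−1, c_n < c'_n, and Σ_{l} c_l = Σ_{l} c'_l > 0. Then (Σ_l c_l a_l)/(Σ_l c_l b_l) < (Σ_l c'_l a_l)/(Σ_l c'_l b_l). -/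
/-!
Write `t = c - c'` for the weight moved from each index `l < n` to the last index `N`.
Since `∑ t = 0`, the sums `A = ∑ c_l a_l`, `B = ∑ c_l b_l` become `A + X` and `B + Y` with
`X = ∑ t_l (a_N - a_l)` and `Y = ∑ t_l (b_N - b_l) > 0`. The old ratio is a mediant of the
`a_l / b_l`, so `A / B ≤ a_N / b_N`, while `a_l / b_l < a_N / b_N` gives
`(a_N - a_l) / (b_N - b_l) > a_N / b_N`, hence `X / Y > a_N / b_N`. Adding to `A / B` the
increment `X / Y`, which exceeds it, raises the ratio.
-/

open Finset

/-- If `A / B ≤ p / q < X / Y`, then `A / B < (A + X) / (B + Y)`. -/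
lemma div_lt_add_div_add_of_mul_le_of_mul_lt {A B X Y p q : ℝ} (hB : 0 < B) (hY : 0 < Y)
    (hq : 0 < q) (hAB : A * q ≤ B * p) (hXY : p * Y < X * q) :
    A / B < (A + X) / (B + Y) := by
  rw [div_lt_div_iff₀ hB (add_pos hB hY)]
  have : A * Y * q < X * B * q := by nlinarith [mul_le_mul_of_nonneg_right hAB hY.le]
  nlinarith [lt_of_mul_lt_mul_right this hq.le]

lemma sum_mul_pos_of_sum_pos {ι : Type*} {s : Finset ι} {c b : ι → ℝ}
    (hc : ∀ l ∈ s, 0 ≤ c l) (hb : ∀ l ∈ s, 0 < b l) (hpos : 0 < ∑ l ∈ s, c l) :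
    0 < ∑ l ∈ s, c l * b l := by
  obtain ⟨k, hks, hk⟩ := exists_lt_of_sum_lt (f := fun _ => (0 : ℝ)) (by simpa using hpos)
  exact sum_pos' (fun l hl => mul_nonneg (hc l hl) (hb l hl).le)
    ⟨k, hks, mul_pos (by simpa using hk) (hb k hks)⟩

lemma sum_mul_le_sum_mul_of_mul_le {ι : Type*} {s : Finset ι} {c a b : ι → ℝ} {p q : ℝ}
    (hc : ∀ l ∈ s, 0 ≤ c l) (hab : ∀ l ∈ s, a l * q ≤ p * b l) :
    (∑ l ∈ s, c l * a l) * q ≤ (∑ l ∈ s, c l * b l) * p := by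
  rw [sum_mul, sum_mul]
  refine sum_le_sum fun l hl => ?_
  nlinarith [mul_le_mul_of_nonneg_left (hab l hl) (hc l hl)]

lemma sum_mul_eq_add_sum_sub_mul_sub {ι : Type*} {s : Finset ι} {c c' : ι → ℝ}
    (hsum : ∑ l ∈ s, c l = ∑ l ∈ s, c' l) (a : ι → ℝ) (N : ι) :
    ∑ l ∈ s, c' l * a l = ∑ l ∈ s, c l * a l + ∑ l ∈ s, (c l - c' l) * (a N - a l) := by
  have hN : ∑ l ∈ s, (c l - c' l) * a N = 0 := by
    rw [← sum_mul, sum_sub_distrib, hsum, sub_self, zero_mul]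
  have hl : ∑ l ∈ s, (c l - c' l) * a l = ∑ l ∈ s, c l * a l - ∑ l ∈ s, c' l * a l := by
    rw [← sum_sub_distrib]; simp_rw [sub_mul]
  simp_rw [mul_sub, sum_sub_distrib, hN, hl]
  ring

lemma sum_mul_pos_of_transfer {ι : Type*} [Fintype ι] {t f : ι → ℝ} {N : ι}
    (ht : ∑ l, t l = 0) (htN : t N < 0) (htl : ∀ l ≠ N, 0 ≤ t l)
    (hfN : f N = 0) (hfl : ∀ l ≠ N, 0 < f l) :
    0 < ∑ l, t l * f l := by
  obtain ⟨k, -, hk⟩ := exists_pos_of_sum_zero_of_exists_nonzero t ht ⟨N, mem_univ N, htN.ne⟩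
  have hkN : k ≠ N := fun h => (h ▸ hk).not_gt htN
  refine sum_pos' (fun l _ => ?_) ⟨k, mem_univ k, mul_pos hk (hfl k hkN)⟩
  rcases eq_or_ne l N with rfl | hl
  · simp [hfN]
  · exact mul_nonneg (htl l hl) (hfl l hl).le

theorem stmt3_general {n : ℕ} (a b c c' : Fin (n + 1) → ℝ)
    (hb : ∀ l, 0 < b l)
    (hab : ∀ l : Fin (n + 1), l ≠ Fin.last n →
      a l / b l < a (Fin.last n) / b (Fin.last n))
    (hbN : ∀ l : Fin (n + 1), l ≠ Fin.last n → b l < b (Fin.last n))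
    (hc : ∀ l, 0 ≤ c l)
    (hcc' : ∀ l : Fin (n + 1), l ≠ Fin.last n → c' l ≤ c l)
    (hcn : c (Fin.last n) < c' (Fin.last n))
    (hsum : ∑ l, c l = ∑ l, c' l) (hpos : 0 < ∑ l, c l) :
    (∑ l, c l * a l) / (∑ l, c l * b l) <
      (∑ l, c' l * a l) / (∑ l, c' l * b l) := by
  set N := Fin.last n
  have hcross : ∀ l ≠ N, a l * b N < a N * b l := fun l hl =>
    (div_lt_div_iff₀ (hb l) (hb N)).mp (hab l hl)
  have ht : ∑ l, (c l - c' l) = 0 := by rw [sum_sub_distrib, hsum, sub_self]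
  have htransfer : ∀ f : Fin (n + 1) → ℝ, f N = 0 → (∀ l ≠ N, 0 < f l) →
      0 < ∑ l, (c l - c' l) * f l := fun _ =>
    sum_mul_pos_of_transfer ht (sub_neg.mpr hcn) fun l hl => sub_nonneg.mpr (hcc' l hl)
  rw [sum_mul_eq_add_sum_sub_mul_sub hsum a N, sum_mul_eq_add_sum_sub_mul_sub hsum b N]
  refine div_lt_add_div_add_of_mul_le_of_mul_lt (p := a N) (q := b N)
    (sum_mul_pos_of_sum_pos (fun l _ => hc l) (fun l _ => hb l) hpos)
    (htransfer _ (sub_self _) fun l hl => sub_pos.mpr (hbN l hl)) (hb N)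
    (sum_mul_le_sum_mul_of_mul_le (fun l _ => hc l) fun l _ => ?_) ?_
  · rcases eq_or_ne l N with rfl | hl
    · rw [mul_comm]
    · exact (hcross l hl).le
  · have key := htransfer (fun l => a N * b l - a l * b N) (by ring)
      fun l hl => sub_pos.mpr (hcross l hl)
    rw [mul_sum, sum_mul, ← sub_pos, ← sum_sub_distrib]
    exact key.trans_eq (sum_congr rfl fun l _ => by ring)

/-- Weighted mediant comparison: shifting weight to the last (dominant) index strictly
increases the ratio of weighted sums. -/
theorem stmt3 {n : ℕ} (hn : 1 < n) (a b c c' : Fin (n + 1) → ℝ)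
    (ha : ∀ l, 0 < a l) (hb : ∀ l, 0 < b l)
    (hab : ∀ l : Fin (n + 1), l ≠ Fin.last n →
      a l / b l < a (Fin.last n) / b (Fin.last n))
    (haN : ∀ l : Fin (n + 1), l ≠ Fin.last n → a l < a (Fin.last n))
    (hbN : ∀ l : Fin (n + 1), l ≠ Fin.last n → b l < b (Fin.last n))
    (hc : ∀ l, 0 ≤ c l) (hc' : ∀ l, 0 ≤ c' l)
    (hcc' : ∀ l : Fin (n + 1), l ≠ Fin.last n → c' l ≤ c l)
    (hcn : c (Fin.last n) < c' (Fin.last n))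
    (hsum : ∑ l, c l = ∑ l, c' l) (hpos : 0 < ∑ l, c l) :
    (∑ l, c l * a l) / (∑ l, c l * b l) <
      (∑ l, c' l * a l) / (∑ l, c' l * b l) :=
  stmt3_general a b c c' hb hab hbN hc hcc' hcn hsum hpos
end

section
/- For Kingman's model with time-varying mutation probabilities, the size-biased fitness distribution admits a determinantal representation: with P_n^n = Q and P_j^n(dx) = (1−b_{j+1}) x P_{j+1}^n(dx)/∫ y P_{j+1}^n(dy) + b_{j+1} Q(dx) for 0 ≤ j ≤ n−1, one has x P_j^n(dx)/∫ y P_j^n(dy) = (|W_x^{j+1,n}|/|W^{j+1,n}|) Q(dx) for all 0 ≤ j ≤ n. -/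
/-!
Expanding `|W^{j,n}|` and `|W_x^{j,n}|` along the first column gives
`|W^{j,n}| = m₁ |W^{j+1,n}| + γ_j |V^{j+1,n}|` and
`|W_x^{j,n}| = x (|W^{j+1,n}| + γ_j |W_x^{j+1,n}|)`, where `V` is `W` with first row
`(m₂, m₃, …)`. As the determinant is linear in the first row, `|V^{j,n}| = ∫ x |W_x^{j,n}| Q(dx)`.
Now if `x P_{j+1}(dx) = M_{j+1} f(x) Q(dx)`, the recursion gives
`P_j = ((1 - b_{j+1}) f + b_{j+1}) Q`, and with `f = |W_x^{j+2,n}| / |W^{j+2,n}|` the two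
expansions say exactly that the size-biased density of `P_j` is `|W_x^{j+1,n}| / |W^{j+1,n}|`.
The same expansions show `|W| > 0` and `|W_x| ≥ 0` on `[0, 1]` when `m₁ > 0`; if `m₁ = 0`, then
`Q = δ₀`, and both sides vanish.
-/

open MeasureTheory

/-- The moment matrix `W^{j,n}` (here of size `s`, with subdiagonal entries
`-γ_start, -γ_{start+1}, …`), with first row `(m_{1+shift}, …, m_{s+shift})` and
Toeplitz moment entries `m_{k-i+1}` above the subdiagonal. -/
noncomputable def Wgen (m γ : ℕ → ℝ) (shift start s : ℕ) : Matrix (Fin s) (Fin s) ℝ :=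
  Matrix.of fun i k =>
    if (i : ℕ) = 0 then m ((k : ℕ) + 1 + shift)
    else if (k : ℕ) + 1 = (i : ℕ) then -γ (start + (i : ℕ) - 1)
    else if (i : ℕ) ≤ (k : ℕ) then m ((k : ℕ) - (i : ℕ) + 1)
    else 0

/-- The matrix `W_x^{j,n}`: as `Wgen` but with first row `(x, x², …, x^s)`. -/
noncomputable def WgenX (m γ : ℕ → ℝ) (x : ℝ) (start s : ℕ) : Matrix (Fin s) (Fin s) ℝ :=
  Matrix.of fun i k =>
    if (i : ℕ) = 0 then x ^ ((k : ℕ) + 1)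
    else if (k : ℕ) + 1 = (i : ℕ) then -γ (start + (i : ℕ) - 1)
    else if (i : ℕ) ≤ (k : ℕ) then m ((k : ℕ) - (i : ℕ) + 1)
    else 0

open Matrix Set

def momentMatrix (m γ r : ℕ → ℝ) (t s : ℕ) : Matrix (Fin s) (Fin s) ℝ :=
  Matrix.of fun i k =>
    if (i : ℕ) = 0 then r k
    else if (k : ℕ) + 1 = (i : ℕ) then -γ (t + (i : ℕ) - 1)
    else if (i : ℕ) ≤ (k : ℕ) then m ((k : ℕ) - (i : ℕ) + 1)
    else 0

namespace momentMatrix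

variable (m γ : ℕ → ℝ)

theorem det_eq_sum (r : ℕ → ℝ) (t s : ℕ) :
    (momentMatrix m γ r t (s + 1)).det = ∑ k : Fin (s + 1), r k *
      ((-1) ^ (k : ℕ) * ((momentMatrix m γ 0 t (s + 1)).submatrix Fin.succ k.succAbove).det) := by
  rw [det_succ_row_zero]
  refine Finset.sum_congr rfl fun k _ => ?_
  have hminor : (momentMatrix m γ r t (s + 1)).submatrix Fin.succ k.succAbove =
      (momentMatrix m γ 0 t (s + 1)).submatrix Fin.succ k.succAbove := by
    ext i j
    simp [momentMatrix]
  rw [hminor]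
  simp only [momentMatrix, of_apply, Fin.val_zero, if_true]
  ring

theorem mul_det (c : ℝ) (r : ℕ → ℝ) (t s : ℕ) :
    c * (momentMatrix m γ r t (s + 1)).det =
      (momentMatrix m γ (fun k => c * r k) t (s + 1)).det := by
  simp only [det_eq_sum, Finset.mul_sum, mul_assoc]

theorem minor_zero_zero (r : ℕ → ℝ) (t s : ℕ) :
    (momentMatrix m γ r t (s + 2)).submatrix (0 : Fin (s + 2)).succAbove Fin.succ =
      momentMatrix m γ (fun k => m (k + 1)) (t + 1) (s + 1) := by
  ext i k
  have := i.isLt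
  simp only [submatrix_apply, Fin.succAbove_zero, momentMatrix, of_apply, Fin.val_succ]
  split_ifs <;>
    first | rfl | contradiction | omega | (congr 1; omega) | (rw [neg_inj]; congr 1; omega)

theorem minor_one_zero (r : ℕ → ℝ) (t s : ℕ) :
    (momentMatrix m γ r t (s + 2)).submatrix (1 : Fin (s + 2)).succAbove Fin.succ =
      momentMatrix m γ (fun k => r (k + 1)) (t + 1) (s + 1) := by
  ext i k
  rcases Fin.eq_zero_or_eq_succ i with rfl | ⟨i, rfl⟩
  · simp [momentMatrix]
  · have : (1 : Fin (s + 2)).succAbove i.succ = i.succ.succ :=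
      Fin.succAbove_of_le_castSucc _ _ (by simp [Fin.le_def])
    simp only [submatrix_apply, this, momentMatrix, of_apply, Fin.val_succ]
    split_ifs <;>
    first | rfl | contradiction | omega | (congr 1; omega) | (rw [neg_inj]; congr 1; omega)

theorem det_succ_succ (r : ℕ → ℝ) (t s : ℕ) :
    (momentMatrix m γ r t (s + 2)).det =
      r 0 * (momentMatrix m γ (fun k => m (k + 1)) (t + 1) (s + 1)).det +
        γ t * (momentMatrix m γ (fun k => r (k + 1)) (t + 1) (s + 1)).det := by
  rw [det_succ_column_zero, Fin.sum_univ_succ, Fin.sum_univ_succ, Fin.succ_zero_eq_one,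
    minor_zero_zero, minor_one_zero, Finset.sum_eq_zero fun i _ => by simp [momentMatrix]]
  simp [momentMatrix]

end momentMatrix

theorem Continuous.integrable_of_ae_mem_compact {X E : Type*}
    [TopologicalSpace X] [T2Space X] [MeasurableSpace X] [OpensMeasurableSpace X]
    [NormedAddCommGroup E] {μ : Measure X} [IsFiniteMeasure μ] {f : X → E} (hf : Continuous f)
    {K : Set X} (hK : IsCompact K) (hμ : ∀ᵐ x ∂μ, x ∈ K) : Integrable f μ := by
  rw [← Measure.restrict_eq_self_of_ae_mem hμ]
  exact hf.continuousOn.integrableOn_compact hK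

section Moments

variable {m γ : ℕ → ℝ}

theorem Wgen_eq_momentMatrix (shift t s : ℕ) :
    Wgen m γ shift t s = momentMatrix m γ (fun k => m (k + 1 + shift)) t s := rfl

theorem WgenX_eq_momentMatrix (x : ℝ) (t s : ℕ) :
    WgenX m γ x t s = momentMatrix m γ (fun k => x ^ (k + 1)) t s := rfl

theorem det_WgenX_succ_succ (x : ℝ) (t s : ℕ) :
    (WgenX m γ x t (s + 2)).det =
      x * ((Wgen m γ 0 (t + 1) (s + 1)).det + γ t * (WgenX m γ x (t + 1) (s + 1)).det) := by
  rw [mul_add, mul_left_comm x (γ t), WgenX_eq_momentMatrix, WgenX_eq_momentMatrix,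
    momentMatrix.det_succ_succ, momentMatrix.mul_det m γ x (fun k => x ^ (k + 1))]
  simp only [zero_add, pow_one, ← pow_succ']
  rfl

theorem det_Wgen_succ_succ (t s : ℕ) :
    (Wgen m γ 0 t (s + 2)).det =
      m 1 * (Wgen m γ 0 (t + 1) (s + 1)).det + γ t * (Wgen m γ 1 (t + 1) (s + 1)).det := by
  rw [Wgen_eq_momentMatrix, momentMatrix.det_succ_succ]
  rfl

theorem continuous_det_WgenX (t s : ℕ) : Continuous fun x => (WgenX m γ x t s).det := by
  refine Continuous.matrix_det (continuous_matrix fun i k => ?_)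
  simp only [WgenX, Matrix.of_apply]
  split_ifs <;> fun_prop

variable {Q : Measure ℝ} [IsFiniteMeasure Q] (hQ : ∀ᵐ x ∂Q, x ∈ Icc (0 : ℝ) 1)
  (hm : ∀ k, m k = ∫ x, x ^ k ∂Q)
include hQ hm

theorem integral_mul_det_WgenX (t s : ℕ) :
    ∫ x, x * (WgenX m γ x t (s + 1)).det ∂Q = (Wgen m γ 1 t (s + 1)).det := by
  have hpow (k : ℕ) : Integrable (fun x : ℝ => x ^ k) Q :=
    (continuous_pow k).integrable_of_ae_mem_compact isCompact_Icc hQ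
  simp only [WgenX_eq_momentMatrix, Wgen_eq_momentMatrix, momentMatrix.det_eq_sum, Finset.mul_sum,
    ← mul_assoc, ← pow_succ']
  rw [integral_finsetSum _ fun k _ => ((hpow _).mul_const _).mul_const _]
  simp only [integral_mul_const, hm]

theorem det_Wgen_shift_one_nonneg {t s : ℕ} (hN : ∀ x, 0 ≤ x → 0 ≤ (WgenX m γ x t (s + 1)).det) :
    0 ≤ (Wgen m γ 1 t (s + 1)).det := by
  rw [← integral_mul_det_WgenX hQ hm]
  exact integral_nonneg_of_ae (hQ.mono fun x hx => mul_nonneg hx.1 (hN x hx.1))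

theorem det_Wgen_pos_and_det_WgenX_nonneg (hγ : ∀ j, 0 ≤ γ j) (hm1 : 0 < m 1) (s : ℕ) :
    ∀ t, 0 < (Wgen m γ 0 t (s + 1)).det ∧ ∀ x, 0 ≤ x → 0 ≤ (WgenX m γ x t (s + 1)).det := by
  induction s with
  | zero => simp [Wgen, WgenX, hm1]
  | succ s ih =>
    intro t
    obtain ⟨hD, hN⟩ := ih (t + 1)
    have hK := det_Wgen_shift_one_nonneg hQ hm hN
    refine ⟨?_, fun x hx => ?_⟩
    · rw [det_Wgen_succ_succ]
      exact add_pos_of_pos_of_nonneg (mul_pos hm1 hD) (mul_nonneg (hγ t) hK)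
    · rw [det_WgenX_succ_succ]
      exact mul_nonneg hx (add_nonneg hD.le (mul_nonneg (hγ t) (hN x hx)))

theorem moment_succ_eq_zero (hm1 : m 1 = 0) (k : ℕ) : m (k + 1) = 0 := by
  have hpow (k : ℕ) : Integrable (fun x : ℝ => x ^ k) Q :=
    (continuous_pow k).integrable_of_ae_mem_compact isCompact_Icc hQ
  refine le_antisymm ?_ (hm (k + 1) ▸ integral_nonneg_of_ae (hQ.mono fun x hx => ?_))
  · calc m (k + 1) ≤ m 1 := by
          rw [hm, hm]
          refine integral_mono_ae (hpow _) (hpow _) (hQ.mono fun x hx => ?_)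
          simpa using pow_le_pow_of_le_one hx.1 hx.2 (Nat.le_add_left 1 k)
      _ = 0 := hm1
  · exact pow_nonneg hx.1 _

end Moments

section WithDensity

variable {α : Type*} [MeasurableSpace α] {μ : Measure α} {f : α → ℝ}

theorem withDensity_ofReal_withDensity_ofReal (hf : Measurable f) (hf0 : 0 ≤ᵐ[μ] f)
    {g : α → ℝ} (hg : Measurable g) :
    (μ.withDensity fun x => ENNReal.ofReal (f x)).withDensity (fun x => ENNReal.ofReal (g x)) =
      μ.withDensity fun x => ENNReal.ofReal (f x * g x) := by
  rw [← withDensity_mul μ hf.ennreal_ofReal hg.ennreal_ofReal]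
  exact withDensity_congr_ae (hf0.mono fun x hx => (ENNReal.ofReal_mul hx).symm)

theorem integral_withDensity_ofReal (hf : Measurable f) (hf0 : 0 ≤ᵐ[μ] f) (g : α → ℝ) :
    ∫ x, g x ∂μ.withDensity (fun x => ENNReal.ofReal (f x)) = ∫ x, f x * g x ∂μ := by
  rw [integral_withDensity_eq_integral_toReal_smul hf.ennreal_ofReal
    (ae_of_all _ fun _ => ENNReal.ofReal_lt_top)]
  exact integral_congr_ae (hf0.mono fun x hx => by simp [ENNReal.toReal_ofReal hx])

end WithDensity

theorem smul_withDensity_add_smul_eq_withDensity {P Q : Measure ℝ} {M b : ℝ} (hM : 0 < M)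
    (hb : b ∈ Icc (0 : ℝ) 1) {f : ℝ → ℝ} (hf : Measurable f) (hf0 : 0 ≤ᵐ[Q] f)
    (hP : P.withDensity (fun x => ENNReal.ofReal (x / M)) =
      Q.withDensity fun x => ENNReal.ofReal (f x)) :
    ENNReal.ofReal ((1 - b) / M) • P.withDensity (fun x => ENNReal.ofReal x) +
        ENNReal.ofReal b • Q =
      Q.withDensity fun x => ENNReal.ofReal ((1 - b) * f x + b) := by
  have hbias : P.withDensity (fun x => ENNReal.ofReal x) =
      ENNReal.ofReal M • P.withDensity (fun x => ENNReal.ofReal (x / M)) := by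
    rw [← withDensity_smul _ (f := fun x : ℝ => ENNReal.ofReal (x / M)) (by fun_prop)]
    congr 1
    funext x
    rw [Pi.smul_apply, smul_eq_mul, ← ENNReal.ofReal_mul hM.le, mul_div_cancel₀ x hM.ne']
  have h1b : 0 ≤ 1 - b := sub_nonneg.2 hb.2
  rw [hbias, hP, smul_smul, ← ENNReal.ofReal_mul (div_nonneg h1b hM.le), div_mul_cancel₀ _ hM.ne',
    ← withDensity_smul _ hf.ennreal_ofReal, ← withDensity_const,
    ← withDensity_add_left (hf.ennreal_ofReal.const_smul _)]
  refine withDensity_congr_ae (hf0.mono fun x hx => ?_)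
  simp only [Pi.add_apply, Pi.smul_apply, smul_eq_mul]
  rw [← ENNReal.ofReal_mul h1b, ← ENNReal.ofReal_add (mul_nonneg h1b hx) hb.1]

theorem integral_id_and_withDensity_of_mixture {P P' Q : Measure ℝ} {M b : ℝ} (hM : 0 < M)
    (hb : b ∈ Icc (0 : ℝ) 1) {f : ℝ → ℝ} (hf : Measurable f) (hf0 : 0 ≤ᵐ[Q] f)
    (hfx : Integrable (fun x => f x * x) Q) (hx : Integrable (fun x : ℝ => x) Q)
    (hP : P.withDensity (fun x => ENNReal.ofReal (x / M)) =
      Q.withDensity fun x => ENNReal.ofReal (f x))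
    (hP' : P' = ENNReal.ofReal ((1 - b) / M) • P.withDensity (fun x => ENNReal.ofReal x) +
        ENNReal.ofReal b • Q) :
    ∫ y, y ∂P' = (1 - b) * ∫ x, f x * x ∂Q + b * ∫ x, x ∂Q ∧
      P'.withDensity (fun x => ENNReal.ofReal (x / ∫ y, y ∂P')) =
        Q.withDensity fun x => ENNReal.ofReal (((1 - b) * f x + b) * (x / ∫ y, y ∂P')) := by
  have hρ : Measurable fun x => (1 - b) * f x + b := by fun_prop
  have hρ0 : 0 ≤ᵐ[Q] fun x => (1 - b) * f x + b :=
    hf0.mono fun x hx => add_nonneg (mul_nonneg (sub_nonneg.2 hb.2) hx) hb.1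
  rw [hP', smul_withDensity_add_smul_eq_withDensity hM hb hf hf0 hP]
  refine ⟨?_, withDensity_ofReal_withDensity_ofReal hρ hρ0 (by fun_prop)⟩
  simp only [integral_withDensity_ofReal hρ hρ0, add_mul, mul_assoc]
  rw [integral_add (hfx.const_mul _) (hx.const_mul _), integral_const_mul, integral_const_mul]

section Kingman

variable {Q : Measure ℝ} {m b γ : ℕ → ℝ} {n : ℕ} {P : ℕ → Measure ℝ}
  (hPn : P n = Q)
  (hrec : ∀ j < n, P j =
    (ENNReal.ofReal ((1 - b (j + 1)) / ∫ y, y ∂(P (j + 1)))) •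
      ((P (j + 1)).withDensity (fun x => ENNReal.ofReal x))
    + (ENNReal.ofReal (b (j + 1))) • Q)
include hPn hrec

theorem integral_id_eq_zero_of_mean_eq_zero (hQ0 : ∫ x, x ∂Q = 0) {j : ℕ} (hj : j ≤ n) :
    ∫ y, y ∂P j = 0 := by
  induction hj using Nat.decreasingInduction with
  | self => rw [hPn, hQ0]
  | of_succ k hk ih =>
    rw [hrec k hk, ih, div_zero, ENNReal.ofReal_zero, zero_smul, zero_add, integral_smul_measure,
      hQ0, smul_zero]

theorem withDensity_div_integral_eq_withDensity_det [IsFiniteMeasure Q]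
    (hQ : ∀ᵐ x ∂Q, x ∈ Icc (0 : ℝ) 1) (hm : ∀ k, m k = ∫ x, x ^ k ∂Q)
    (hb : ∀ j, b j ∈ Ioo (0 : ℝ) 1)
    (hγ : ∀ j, γ j = (1 - b j) / b j) (hm1 : 0 < m 1) {j : ℕ} (hj : j ≤ n) :
    0 < ∫ y, y ∂P j ∧
      (P j).withDensity (fun x => ENNReal.ofReal (x / ∫ y, y ∂(P j))) =
        Q.withDensity (fun x => ENNReal.ofReal
          ((WgenX m γ x (j + 1) (n - j + 1)).det / (Wgen m γ 0 (j + 1) (n - j + 1)).det)) := by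
  have hQmean : ∫ x, x ∂Q = m 1 := by simp [hm]
  have hγ0 (j : ℕ) : 0 ≤ γ j := hγ j ▸ div_nonneg (sub_nonneg.2 (hb j).2.le) (hb j).1.le
  have hint {g : ℝ → ℝ} (hg : Continuous g) : Integrable g Q :=
    hg.integrable_of_ae_mem_compact isCompact_Icc hQ
  induction hj using Nat.decreasingInduction with
  | self =>
    rw [Nat.sub_self]
    simp [hPn, hQmean, hm1, Wgen, WgenX]
  | of_succ k hk ih =>
    obtain ⟨s, hs, hs'⟩ : ∃ s, n - (k + 1) + 1 = s + 1 ∧ n - k + 1 = s + 2 :=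
      ⟨n - (k + 1), rfl, by omega⟩
    rw [hs] at ih
    rw [hs']
    obtain ⟨hM, hbias⟩ := ih
    obtain ⟨hb0, hb1⟩ := hb (k + 1)
    obtain ⟨hD, hN⟩ := det_Wgen_pos_and_det_WgenX_nonneg hQ hm hγ0 hm1 s (k + 1 + 1)
    have hK := det_Wgen_shift_one_nonneg hQ hm hN
    set D := (Wgen m γ 0 (k + 1 + 1) (s + 1)).det
    set K := (Wgen m γ 1 (k + 1 + 1) (s + 1)).det
    set N := fun x => (WgenX m γ x (k + 1 + 1) (s + 1)).det
    have hNcont : Continuous N := continuous_det_WgenX _ _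
    have hKD : ∫ x, N x / D * x ∂Q = K / D := by
      rw [show K = _ from (integral_mul_det_WgenX hQ hm _ _).symm, ← integral_div]
      exact integral_congr_ae (ae_of_all _ fun x => by ring)
    obtain ⟨hmean, hsize⟩ := integral_id_and_withDensity_of_mixture hM (Ioo_subset_Icc_self (hb _))
      (f := fun x => N x / D) (by fun_prop) (hQ.mono fun x hx => div_nonneg (hN x hx.1) hD.le)
      (hint (by fun_prop)) (hint continuous_id) hbias (hrec k hk)
    rw [hKD, hQmean] at hmean
    have hMpos : 0 < (1 - b (k + 1)) * (K / D) + b (k + 1) * m 1 := by positivity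
    refine ⟨hmean ▸ hMpos, hsize.trans (withDensity_congr_ae (ae_of_all _ fun x => ?_))⟩
    have hb0' := hb0.ne'
    have key : ((1 - b (k + 1)) * (N x / D) + b (k + 1)) *
        (x / ((1 - b (k + 1)) * (K / D) + b (k + 1) * m 1)) =
          x * (D + γ (k + 1) * N x) / (m 1 * D + γ (k + 1) * K) := by
      rw [hγ]
      field_simp
      ring
    dsimp only
    rw [hmean, key, det_WgenX_succ_succ, det_Wgen_succ_succ]

end Kingman

/-- Matrix representation of the backward sequence in Kingman's model with time-varying
mutation probabilities: with `P_n^n = Q` and the backward recursion, the size-biased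
distribution of `P_j^n` has density `|W_x^{j+1,n}|/|W^{j+1,n}|` with respect to `Q`. -/
theorem stmt7 (Q : Measure ℝ) [IsProbabilityMeasure Q] (hQsupp : Q (Set.Icc 0 1) = 1)
    (m : ℕ → ℝ) (hm : ∀ k, m k = ∫ x, x ^ k ∂Q)
    (b : ℕ → ℝ) (hb : ∀ j, b j ∈ Set.Ioo (0 : ℝ) 1)
    (γ : ℕ → ℝ) (hγ : ∀ j, γ j = (1 - b j) / b j)
    (n : ℕ) (P : ℕ → Measure ℝ)
    (hPn : P n = Q)
    (hrec : ∀ j < n, P j =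
      (ENNReal.ofReal ((1 - b (j + 1)) / ∫ y, y ∂(P (j + 1)))) •
        ((P (j + 1)).withDensity (fun x => ENNReal.ofReal x))
      + (ENNReal.ofReal (b (j + 1))) • Q) :
    ∀ j ≤ n,
      (P j).withDensity (fun x => ENNReal.ofReal (x / ∫ y, y ∂(P j))) =
        Q.withDensity (fun x => ENNReal.ofReal
          ((WgenX m γ x (j + 1) (n - j + 1)).det / (Wgen m γ 0 (j + 1) (n - j + 1)).det)) := by
  have hQ : ∀ᵐ x ∂Q, x ∈ Icc (0 : ℝ) 1 :=
    (ae_mem_iff_measure_eq measurableSet_Icc.nullMeasurableSet).2 (by rw [hQsupp, measure_univ])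
  have hmean : ∫ x, x ∂Q = m 1 := by simp [hm]
  intro j hj
  rcases (hmean ▸ integral_nonneg_of_ae (hQ.mono fun x hx => hx.1)).eq_or_lt with hm1 | hm1
  · have hD : (Wgen m γ 0 (j + 1) (n - j + 1)).det = 0 :=
      Matrix.det_eq_zero_of_row_eq_zero 0 fun k => moment_succ_eq_zero hQ hm hm1.symm _
    rw [integral_id_eq_zero_of_mean_eq_zero hPn hrec (hmean.trans hm1.symm) hj, hD]
    simp
  · exact (withDensity_div_integral_eq_withDensity_det hPn hrec hQ hm hb hγ hm1 hj).2
end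

section
/- Let M be an n×n matrix of type (*): M_{i,j} > 0 if i ≤ j, M_{i,j} < 0 if i = j+1, and M_{i,j} = 0 if i > j+1. Then det(M) = Σ_{e ∈ ℰⁿ} d_M(e) > 0, where the sum runs over all strictly increasing sequences e = (e₁ < … < e_k) with e₁ = 1 and e_k = n+1, and d_M(e) = Π_{i=1}^{k−1} d(M(e_i, e_{i+1}−1)), with M(i,j) the submatrix of M with rows and columns from i to j and d(N) = N_{1,m} Π_{i=2}^m |N_{i,i−1}| for an m×m matrix N. -/
/-- `A` (with 1-based indices `1..n`) is a matrix of type (*): positive on and above the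
diagonal, negative on the subdiagonal, zero below the subdiagonal. -/
def TypeStar (A : ℕ → ℕ → ℝ) (n : ℕ) : Prop :=
  ∀ i j, 1 ≤ i → i ≤ n → 1 ≤ j → j ≤ n →
    (i ≤ j → 0 < A i j) ∧ (i = j + 1 → A i j < 0) ∧ (i > j + 1 → A i j = 0)

/-- Determinant of the block `M(i,j)` of `A` with (1-based) row/column indices `i..j`. -/
noncomputable def subDet (A : ℕ → ℕ → ℝ) (i j : ℕ) : ℝ :=
  (Matrix.of fun r c : Fin (j - i + 1) => A (i + (r : ℕ)) (i + (c : ℕ))).det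

/-- `d(M(i,j))`: top-right entry of the block times the absolute values of its
subdiagonal entries. -/
noncomputable def dBlock (A : ℕ → ℕ → ℝ) (i j : ℕ) : ℝ :=
  A i j * ∏ r ∈ Finset.Icc (i + 1) j, |A r (r - 1)|

/-- `d_M(e) = ∏ d(M(e_i, e_{i+1} - 1))` over consecutive pairs of the sequence `e`. -/
noncomputable def dSeq (A : ℕ → ℕ → ℝ) (e : List ℕ) : ℝ :=
  ((e.zip e.tail).map (fun p => dBlock A p.1 (p.2 - 1))).prod

lemma sort_insert_max (s : Finset ℕ) (a : ℕ) (h : ∀ x ∈ s, x < a) :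
    Finset.sort (insert a s) (· ≤ ·) = Finset.sort s (· ≤ ·) ++ [a] := by
  have ha : a ∉ s := fun hmem => lt_irrefl a (h a hmem)
  refine (fun hp h1 h2 => List.Perm.eq_of_pairwise' (r := (· ≤ ·)) h1 h2 hp) ?_ ?_ ?_
  · refine (Finset.sort_perm_toList _ _).trans ?_
    refine (Finset.toList_insert ha).trans ?_
    refine ((List.Perm.cons a ((Finset.sort_perm_toList s (· ≤ ·)).symm)).trans ?_)
    exact (List.perm_append_singleton a _).symm
  · exact Finset.pairwise_sort _ _
  · rw [List.pairwise_append]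
    refine ⟨Finset.pairwise_sort _ _, List.pairwise_singleton _ _, ?_⟩
    intro x hx y hy
    rw [List.mem_singleton] at hy
    subst hy
    exact le_of_lt (h x ((Finset.mem_sort _).1 hx))

lemma dSeq_nil (A : ℕ → ℕ → ℝ) : dSeq A [] = 1 := rfl
lemma dSeq_single (A : ℕ → ℕ → ℝ) (x : ℕ) : dSeq A [x] = 1 := rfl

lemma dSeq_cons_cons (A : ℕ → ℕ → ℝ) (x y : ℕ) (t : List ℕ) :
    dSeq A (x :: y :: t) = dBlock A x (y - 1) * dSeq A (y :: t) := by
  simp [dSeq]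

lemma dSeq_concat (A : ℕ → ℕ → ℝ) : ∀ (l : List ℕ) (j a : ℕ),
    dSeq A ((l ++ [j]) ++ [a]) = dSeq A (l ++ [j]) * dBlock A j (a - 1)
  | [], j, a => by
      simp [dSeq_cons_cons, dSeq_single, dSeq_nil, mul_comm]
  | x :: l, j, a => by
      cases l with
      | nil =>
          simp only [List.cons_append, List.nil_append, dSeq_cons_cons, dSeq_single, mul_one]
      | cons y t =>
          have IH := dSeq_concat A (y :: t) j a
          simp only [List.cons_append] at IH ⊢
          rw [dSeq_cons_cons, dSeq_cons_cons A x y, IH]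
          ring

lemma dBlock_pos (A : ℕ → ℕ → ℝ) (n : ℕ) (hA : TypeStar A n) (i j : ℕ)
    (h1 : 1 ≤ i) (hij : i ≤ j) (hjn : j ≤ n) : 0 < dBlock A i j := by
  apply mul_pos
  · exact (hA i j h1 (hij.trans hjn) (h1.trans hij) hjn).1 hij
  · apply Finset.prod_pos
    intro r hr
    rw [Finset.mem_Icc] at hr
    rw [abs_pos]
    apply ne_of_lt
    exact (hA r (r - 1) (by omega) (by omega) (by omega) (by omega)).2.1 (by omega)

lemma dSeq_pos (A : ℕ → ℕ → ℝ) (n : ℕ) (hA : TypeStar A n) :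
    ∀ l : List ℕ, l.Chain' (· < ·) → (∀ x ∈ l, 1 ≤ x ∧ x ≤ n + 1) → 0 < dSeq A l
  | [], _, _ => one_pos
  | [x], _, _ => one_pos
  | x :: y :: t, hc, hb => by
      rw [dSeq_cons_cons]
      apply mul_pos
      · have hxy : x < y := (List.isChain_cons_cons.1 hc).1
        have hx := hb x (by simp)
        have hy := hb y (by simp)
        exact dBlock_pos A n hA x (y - 1) hx.1 (by omega) (by omega)
      · exact dSeq_pos A n hA (y :: t) (List.isChain_cons_cons.1 hc).2
          (fun z hz => hb z (List.mem_cons_of_mem x hz))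

noncomputable def Emat (A : ℕ → ℕ → ℝ) (k m : ℕ) : Matrix (Fin (k + 1)) (Fin (k + 1)) ℝ :=
  Matrix.of fun i j => A (1 + (i : ℕ)) (if (j : ℕ) = k then m else 1 + (j : ℕ))

lemma Emat_det_zero (A : ℕ → ℕ → ℝ) (m : ℕ) : (Emat A 0 m).det = A 1 m := by
  rw [Matrix.det_fin_one]
  simp [Emat]

lemma subDet_eq_Emat (A : ℕ → ℕ → ℝ) (k : ℕ) : subDet A 1 (k + 1) = (Emat A k (k + 1)).det := by
  unfold subDet Emat
  congr 1
  funext i j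
  simp only [Matrix.of_apply]
  split
  · next h => rw [h]; ring_nf
  · rfl

lemma Erec (A : ℕ → ℕ → ℝ) (n : ℕ) (hA : TypeStar A n) (k m : ℕ) (hk : k + 2 ≤ n) :
    (Emat A (k + 1) m).det =
      A (k + 2) m * (Emat A k (k + 1)).det - A (k + 2) (k + 1) * (Emat A k m).det := by
  rw [Matrix.det_succ_row _ (Fin.last (k + 1))]
  rw [Fin.sum_univ_castSucc, Fin.sum_univ_castSucc]
  have hzero : ∀ j : Fin k,
      (-1 : ℝ) ^ ((Fin.last (k + 1) : ℕ) + ((j.castSucc.castSucc : Fin (k+2)) : ℕ)) *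
        Emat A (k+1) m (Fin.last (k+1)) j.castSucc.castSucc *
        ((Emat A (k+1) m).submatrix (Fin.last (k+1)).succAbove
          j.castSucc.castSucc.succAbove).det = 0 := by
    intro j
    have hj : ((j.castSucc.castSucc : Fin (k+2)) : ℕ) = (j : ℕ) := rfl
    have hne : ((j.castSucc.castSucc : Fin (k+2)) : ℕ) ≠ k + 1 := by
      rw [hj]; omega
    have : Emat A (k+1) m (Fin.last (k+1)) j.castSucc.castSucc = 0 := by
      simp only [Emat, Matrix.of_apply, Fin.val_last, hj]
      rw [if_neg (show ¬ (j:ℕ) = k + 1 by have := j.isLt; omega)]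
      exact (hA (1 + (k+1)) (1 + (j:ℕ)) (by omega) (by omega) (by omega)
        (by have := j.isLt; omega)).2.2 (by have := j.isLt; omega)
    rw [this]; ring
  rw [Finset.sum_eq_zero (fun j _ => hzero j), zero_add]
  have hminor2 : (Emat A (k+1) m).submatrix (Fin.last (k+1)).succAbove
      (Fin.last (k+1)).succAbove = Emat A k (k+1) := by
    ext i j
    simp only [Matrix.submatrix_apply, Fin.succAbove_last, Emat, Matrix.of_apply,
      Fin.coe_castSucc]
    have hj := j.isLt
    congr 1
    split_ifs <;> omega
  have hminor1 : (Emat A (k+1) m).submatrix (Fin.last (k+1)).succAbove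
      ((Fin.last k).castSucc).succAbove = Emat A k m := by
    ext i j
    simp only [Matrix.submatrix_apply, Fin.succAbove_last, Emat, Matrix.of_apply,
      Fin.coe_castSucc]
    rcases Nat.lt_or_ge (j : ℕ) k with h | h
    · rw [Fin.succAbove_of_castSucc_lt _ _ (by
        simp only [Fin.lt_def, Fin.coe_castSucc, Fin.val_last]; exact h)]
      simp only [Fin.coe_castSucc]
      rw [if_neg (by omega), if_neg (by omega)]
    · have hjk : (j : ℕ) = k := by have := j.isLt; omega
      rw [Fin.succAbove_of_le_castSucc _ _ (by
        simp only [Fin.le_def, Fin.coe_castSucc, Fin.val_last]; omega)]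
      simp only [Fin.val_succ]
      rw [if_pos (by omega), if_pos hjk]
  rw [hminor1, hminor2]
  have hv1 : ((Fin.last (k+1) : Fin (k+2)) : ℕ) = k + 1 := rfl
  have hv2 : (((Fin.last k).castSucc : Fin (k+2)) : ℕ) = k := rfl
  have hE1 : Emat A (k+1) m (Fin.last (k+1)) ((Fin.last k).castSucc) = A (k+2) (k+1) := by
    simp only [Emat, Matrix.of_apply, hv1, hv2]
    rw [if_neg (by omega)]
    congr 1 <;> omega
  have hE2 : Emat A (k+1) m (Fin.last (k+1)) (Fin.last (k+1)) = A (k+2) m := by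
    simp only [Emat, Matrix.of_apply, hv1]
    rw [if_pos trivial]
    congr 1
    omega
  rw [hE1, hE2, hv1, hv2]
  have hs1 : (-1 : ℝ) ^ (k + 1 + k) = -1 := Odd.neg_one_pow ⟨k, by ring⟩
  have hs2 : (-1 : ℝ) ^ (k + 1 + (k + 1)) = 1 := Even.neg_one_pow ⟨k + 1, by ring⟩
  rw [hs1, hs2]
  ring

noncomputable def D0 (A : ℕ → ℕ → ℝ) (j : ℕ) : ℝ := if j = 0 then 1 else subDet A 1 j

lemma Eformula (A : ℕ → ℕ → ℝ) (n : ℕ) (hA : TypeStar A n) :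
    ∀ k, k + 1 ≤ n → ∀ m, (Emat A k m).det =
      ∑ j ∈ Finset.Icc 1 (k + 1),
        A j m * (∏ r ∈ Finset.Icc (j + 1) (k + 1), |A r (r - 1)|) * D0 A (j - 1)
  | 0, hk, m => by
      rw [Emat_det_zero]
      rw [show Finset.Icc 1 1 = {1} from rfl, Finset.sum_singleton]
      simp [D0]
  | (k + 1), hk, m => by
      rw [Erec A n hA k m hk, Eformula A n hA k (by omega) m]
      rw [Finset.sum_Icc_succ_top (by omega : 1 ≤ k + 2)]
      have hsplit : ∀ j ∈ Finset.Icc 1 (k + 1),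
          A j m * (∏ r ∈ Finset.Icc (j + 1) (k + 2), |A r (r - 1)|) * D0 A (j - 1)
          = |A (k + 2) (k + 1)| *
            (A j m * (∏ r ∈ Finset.Icc (j + 1) (k + 1), |A r (r - 1)|) * D0 A (j - 1)) := by
        intro j hj
        rw [Finset.mem_Icc] at hj
        rw [Finset.prod_Icc_succ_top (by omega : j + 1 ≤ k + 2)]
        have : |A (k + 2) (k + 2 - 1)| = |A (k + 2) (k + 1)| := by norm_num
        rw [this]
        ring
      rw [Finset.sum_congr rfl hsplit, ← Finset.mul_sum]
      have hD : D0 A (k + 2 - 1) = (Emat A k (k + 1)).det := by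
        rw [show k + 2 - 1 = k + 1 from rfl, D0, if_neg (by omega), subDet_eq_Emat]
      rw [hD]
      have : Finset.Icc (k + 2 + 1) (k + 2) = ∅ := by
        rw [Finset.Icc_eq_empty]; omega
      rw [this, Finset.prod_empty]
      have hneg : A (k + 2) (k + 1) < 0 :=
        (hA (k + 2) (k + 1) (by omega) hk (by omega) (by omega)).2.1 rfl
      rw [abs_of_neg hneg]
      ring

lemma Dformula (A : ℕ → ℕ → ℝ) (n : ℕ) (hA : TypeStar A n) (K : ℕ) (hK1 : 1 ≤ K) (hKn : K ≤ n) :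
    subDet A 1 K = ∑ j ∈ Finset.Icc 1 K, dBlock A j K * D0 A (j - 1) := by
  obtain ⟨k, rfl⟩ : ∃ k, K = k + 1 := ⟨K - 1, by omega⟩
  rw [subDet_eq_Emat, Eformula A n hA k (by omega) (k + 1)]
  apply Finset.sum_congr rfl
  intro j hj
  rw [dBlock]


lemma mainFormula (A : ℕ → ℕ → ℝ) (n : ℕ) (hA : TypeStar A n) (K : ℕ) :
    1 ≤ K → K ≤ n →
    subDet A 1 K = ∑ T ∈ (Finset.Ioo 1 (K + 1)).powerset,
      dSeq A (Finset.sort (insert 1 (insert (K + 1) T)) (· ≤ ·)) := by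
  induction K using Nat.strong_induction_on with
  | _ K IH =>
  intro hK1 hKn
  rw [Dformula A n hA K hK1 hKn]
  set g : Finset ℕ → ℝ :=
    fun T => dSeq A (Finset.sort (insert 1 (insert (K + 1) T)) (· ≤ ·)) with hg
  set i : (Σ _ : ℕ, Finset ℕ) → Finset ℕ :=
    fun p => if p.1 = 1 then (∅ : Finset ℕ) else insert p.1 p.2 with hi
  set jm : Finset ℕ → (Σ _ : ℕ, Finset ℕ) :=
    fun T => if h : T.Nonempty then ⟨T.max' h, T.erase (T.max' h)⟩ else ⟨1, ∅⟩ with hjm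
  have key : ∑ p ∈ (Finset.Icc 1 K).sigma (fun j => (Finset.Ioo 1 j).powerset), g (i p)
      = ∑ T ∈ (Finset.Ioo 1 (K + 1)).powerset, g T := by
    apply Finset.sum_nbij' i jm
    · rintro ⟨j, T'⟩ hp
      rw [Finset.mem_sigma] at hp
      obtain ⟨hj, hT'⟩ := hp
      rw [Finset.mem_Icc] at hj
      rw [Finset.mem_powerset] at hT'
      simp only [hi]
      dsimp only at hj hT' ⊢
      split_ifs with h1
      · exact Finset.empty_mem_powerset _
      · rw [Finset.mem_powerset]
        apply Finset.insert_subset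
        · rw [Finset.mem_Ioo]; omega
        · refine hT'.trans ?_
          intro x hx
          rw [Finset.mem_Ioo] at hx ⊢
          omega
    · intro T hT
      rw [Finset.mem_powerset] at hT
      simp only [hjm]
      by_cases h : T.Nonempty
      · rw [dif_pos h]
        have hM := T.max'_mem h
        have hMIoo := hT hM
        rw [Finset.mem_Ioo] at hMIoo
        refine Finset.mem_sigma.2 ⟨?_, ?_⟩
        · show T.max' h ∈ Finset.Icc 1 K
          rw [Finset.mem_Icc]; omega
        show T.erase (T.max' h) ∈ (Finset.Ioo 1 (T.max' h)).powerset
        rw [Finset.mem_powerset]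
        intro x hx
        rw [Finset.mem_erase] at hx
        have hxIoo := hT hx.2
        rw [Finset.mem_Ioo] at hxIoo
        rw [Finset.mem_Ioo]
        have := Finset.le_max' T x hx.2
        exact ⟨hxIoo.1, lt_of_le_of_ne this hx.1⟩
      · rw [dif_neg h]
        refine Finset.mem_sigma.2 ⟨?_, ?_⟩
        · show (1:ℕ) ∈ Finset.Icc 1 K
          rw [Finset.mem_Icc]; omega
        · show (∅ : Finset ℕ) ∈ (Finset.Ioo 1 1).powerset
          exact Finset.empty_mem_powerset _
    · rintro ⟨j, T'⟩ hp
      rw [Finset.mem_sigma] at hp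
      obtain ⟨hj, hT'⟩ := hp
      rw [Finset.mem_Icc] at hj
      rw [Finset.mem_powerset] at hT'
      have hj' : 1 ≤ j ∧ j ≤ K := hj
      have hT'' : T' ⊆ Finset.Ioo 1 j := hT'
      clear hj hT'
      rename' hj' => hj, hT'' => hT'
      simp only [hi, hjm]
      by_cases h1 : j = 1
      · subst h1
        have hT'e : T' = ∅ := by
          rw [← Finset.subset_empty]
          refine hT'.trans ?_
          simp
        subst hT'e
        rw [if_pos rfl, dif_neg (by simp)]
      · rw [if_neg h1]
        have hne : (insert j T').Nonempty := Finset.insert_nonempty _ _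
        rw [dif_pos hne]
        have hjnotin : j ∉ T' := by
          intro hmem
          have := hT' hmem
          rw [Finset.mem_Ioo] at this
          omega
        have hmax : (insert j T').max' hne = j := by
          apply le_antisymm
          · apply Finset.max'_le
            intro x hx
            rcases Finset.mem_insert.1 hx with rfl | hx
            · exact le_refl _
            · have := hT' hx
              rw [Finset.mem_Ioo] at this
              omega
          · exact Finset.le_max' _ _ (Finset.mem_insert_self _ _)
        rw [hmax, Finset.erase_insert hjnotin]
    · intro T hT
      rw [Finset.mem_powerset] at hT
      simp only [hi, hjm]
      by_cases h : T.Nonempty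
      · have hM := T.max'_mem h
        have hMIoo := hT hM
        rw [Finset.mem_Ioo] at hMIoo
        rw [dif_pos h]
        dsimp only
        rw [if_neg (by omega)]
        exact Finset.insert_erase hM
      · rw [dif_neg h]
        dsimp only
        rw [Finset.not_nonempty_iff_eq_empty] at h
        rw [if_pos rfl, h]
    · intro p _
      rfl
  rw [← key, Finset.sum_sigma]
  apply Finset.sum_congr rfl
  intro j hj
  rw [Finset.mem_Icc] at hj
  rcases Nat.eq_or_lt_of_le hj.1 with h1 | h1
  · -- j = 1
    have hj1 : j = 1 := h1.symm
    subst hj1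
    rw [show Finset.Ioo 1 1 = ∅ from Finset.Ioo_self 1, Finset.powerset_empty,
      Finset.sum_singleton]
    simp only [hi, hg, if_pos rfl]
    have hins : (insert 1 (insert (K + 1) (∅ : Finset ℕ))) = insert (K + 1) {1} := by
      rw [Finset.insert_comm]; rfl
    rw [hins, sort_insert_max {1} (K + 1) (by intro x hx; simp at hx; omega),
      Finset.sort_singleton]
    rw [show ([1] ++ [K + 1] : List ℕ) = [1, K + 1] from rfl, dSeq_cons_cons]
    have : dSeq A [K + 1] = 1 := rfl
    rw [this, mul_one]
    simp [D0]
  · -- 2 ≤ j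
    obtain ⟨i', rfl⟩ : ∃ i', j = i' + 2 := ⟨j - 2, by omega⟩
    have hstep : ∀ T' ∈ (Finset.Ioo 1 (i' + 2)).powerset,
        g (i ⟨i' + 2, T'⟩) =
          dSeq A (Finset.sort (insert 1 (insert (i' + 2) T')) (· ≤ ·)) *
            dBlock A (i' + 2) K := by
      intro T' hT'
      rw [Finset.mem_powerset] at hT'
      simp only [hi, hg]
      rw [if_neg (by omega)]
      have hT'lt : ∀ x ∈ T', x < i' + 2 := by
        intro x hx
        have := hT' hx
        rw [Finset.mem_Ioo] at this
        omega
      have e1 : insert 1 (insert (K + 1) (insert (i' + 2) T'))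
          = insert (K + 1) (insert (i' + 2) (insert 1 T')) := by
        rw [Finset.insert_comm 1 (K + 1), Finset.insert_comm 1 (i' + 2)]
      have e2 : insert 1 (insert (i' + 2) T') = insert (i' + 2) (insert 1 T') := by
        rw [Finset.insert_comm]
      have hlt1 : ∀ x ∈ insert (i' + 2) (insert 1 T'), x < K + 1 := by
        intro x hx
        rcases Finset.mem_insert.1 hx with rfl | hx
        · omega
        · rcases Finset.mem_insert.1 hx with rfl | hx
          · omega
          · have := hT'lt x hx; omega
      have hlt2 : ∀ x ∈ insert 1 T', x < i' + 2 := by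
        intro x hx
        rcases Finset.mem_insert.1 hx with rfl | hx
        · omega
        · exact hT'lt x hx
      rw [e1, sort_insert_max _ _ hlt1, sort_insert_max _ _ hlt2, dSeq_concat,
        ← sort_insert_max _ _ hlt2, ← e2]
      norm_num
    rw [Finset.sum_congr rfl hstep, ← Finset.sum_mul]
    have hIH := IH (i' + 1) (by omega) (by omega) (by omega)
    rw [show i' + 1 + 1 = i' + 2 from rfl] at hIH
    rw [← hIH]
    rw [show i' + 2 - 1 = i' + 1 from rfl, D0, if_neg (by omega)]
    ring

/-- Combinatorial determinant formula for type (*) matrices: `det M = Σ_{e ∈ ℰⁿ} d_M(e)`,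
where `e` runs over all strictly increasing sequences from `1` to `n+1` (encoded by their
sets `T` of interior points); in particular `det M > 0`. -/
theorem stmt9 (n : ℕ) (hn : 1 ≤ n) (A : ℕ → ℕ → ℝ) (hA : TypeStar A n) :
    subDet A 1 n =
      (∑ T ∈ (Finset.Ioo 1 (n + 1)).powerset,
        dSeq A (Finset.sort (insert 1 (insert (n + 1) T)) (· ≤ ·))) ∧
    0 < subDet A 1 n := by
  have hmain := mainFormula A n hA n hn (le_refl n)
  refine ⟨hmain, ?_⟩
  rw [hmain]
  apply Finset.sum_pos
  · intro T hT
    rw [Finset.mem_powerset] at hT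
    apply dSeq_pos A n hA
    · exact (Finset.sortedLT_sort _).isChain
    · intro x hx
      rw [Finset.mem_sort] at hx
      rcases Finset.mem_insert.1 hx with rfl | hx
      · omega
      · rcases Finset.mem_insert.1 hx with rfl | hx
        · omega
        · have := hT hx
          rw [Finset.mem_Ioo] at this
          omega
  · exact ⟨∅, Finset.empty_mem_powerset _⟩
end

section
/- Strict Hessenberg determinant inequality: for the moment matrices W^n built from a non-Dirac probability measure Q on [0,1] and parameters γ_i ∈ (0,∞), and for any 1 ≤ j ≤ n, one has det(W^{j−1}) · det(W^{j+1,n}) < d det(W^n)/dγ_j, where the derivative with respect to γ_j equals the determinant of the matrix obtained from W^n by deleting the row and column containing −γ_j. -/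
/-!
Writing `W(sh, st, s)` for `Wgen m γ sh st s`, expansion along the first column gives
`det W(sh, st, s + 2) = m (sh + 1) * det W(0, st + 1, s + 1)`
`  + γ st * det W(sh + 1, st + 1, s + 1)`.
Expanding along row `j`, `det W^n` is affine in `γ_j` with slope the minor `D`, and at `γ_j = 0`
the matrix is block triangular, so its determinant is `det W^{j-1} * det W^{j+1,n}`. The claim
thus reads `2 * det W^n|_{γ_j = 0} < det W^n|_{γ_j = 1}`, which follows from the recursion by
induction on `j`; its base case is `m a * det W(b, ·) < det W(a + b, ·)`, again an induction,
bottoming out in the strict Chebyshev inequality `m a * m b < m (a + b)` for a non-Dirac measure.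
-/

open MeasureTheory

open Function

lemma Continuous.integrable_of_ae_mem_Icc {Q : Measure ℝ} [IsFiniteMeasure Q] {a b : ℝ}
    (hQ : ∀ᵐ x ∂Q, x ∈ Set.Icc a b) {f : ℝ → ℝ} (hf : Continuous f) : Integrable f Q := by
  have := hf.integrableOn_Icc (μ := Q) (a := a) (b := b)
  rwa [IntegrableOn, Measure.restrict_eq_self_of_ae_mem hQ] at this

lemma Measure.eq_dirac_of_ae_eq {α : Type*} [MeasurableSpace α] {μ : Measure α}
    [IsProbabilityMeasure μ] {a : α} (h : ∀ᵐ x ∂μ, x = a) : μ = Measure.dirac a :=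
  calc μ = μ.map id := Measure.map_id.symm
    _ = μ.map (fun _ ↦ a) := Measure.map_congr h
    _ = Measure.dirac a := by rw [Measure.map_const, measure_univ, one_smul]

lemma integral_pow_nonneg_of_ae_nonneg {Q : Measure ℝ} (hQ : ∀ᵐ x ∂Q, 0 ≤ x) (k : ℕ) :
    0 ≤ ∫ x, x ^ k ∂Q :=
  integral_nonneg_of_ae (hQ.mono fun _ hx ↦ pow_nonneg hx k)

lemma mul_pow_sub_pow_nonneg {x t : ℝ} (hx : 0 ≤ x) (ht : 0 ≤ t) (a b : ℕ) :
    0 ≤ (x ^ a - t ^ a) * (x ^ b - t ^ b) := by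
  rcases le_total x t with h | h
  · exact mul_nonneg_of_nonpos_of_nonpos (sub_nonpos.2 (pow_le_pow_left₀ hx h a))
      (sub_nonpos.2 (pow_le_pow_left₀ hx h b))
  · exact mul_nonneg (sub_nonneg.2 (pow_le_pow_left₀ ht h a))
      (sub_nonneg.2 (pow_le_pow_left₀ ht h b))

lemma eq_of_mul_pow_sub_pow_eq_zero {x t : ℝ} (hx : 0 ≤ x) (ht : 0 ≤ t) {a b : ℕ} (ha : a ≠ 0)
    (hb : b ≠ 0) (h : (x ^ a - t ^ a) * (x ^ b - t ^ b) = 0) : x = t := by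
  rcases mul_eq_zero.1 h with h | h
  · exact (pow_left_inj₀ hx ht ha).1 (sub_eq_zero.1 h)
  · exact (pow_left_inj₀ hx ht hb).1 (sub_eq_zero.1 h)

lemma integral_mul_pow_sub_pow {Q : Measure ℝ} [IsProbabilityMeasure Q]
    (hint : ∀ k : ℕ, Integrable (fun x ↦ x ^ k) Q) (t : ℝ) (a b : ℕ) :
    ∫ x, (x ^ a - t ^ a) * (x ^ b - t ^ b) ∂Q
      = ∫ x, x ^ (a + b) ∂Q - t ^ b * ∫ x, x ^ a ∂Q - t ^ a * ((∫ x, x ^ b ∂Q) - t ^ b) := by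
  have h₁ : Integrable (fun x ↦ x ^ (a + b) - t ^ b * x ^ a) Q :=
    (hint _).sub ((hint a).const_mul _)
  have h₂ : Integrable (fun x ↦ t ^ a * (x ^ b - t ^ b)) Q :=
    ((hint b).sub (integrable_const _)).const_mul _
  calc ∫ x, (x ^ a - t ^ a) * (x ^ b - t ^ b) ∂Q
      = ∫ x, (x ^ (a + b) - t ^ b * x ^ a - t ^ a * (x ^ b - t ^ b)) ∂Q := by
        congr 1; funext x; ring
    _ = _ := by
      rw [integral_sub h₁ h₂, integral_sub (hint _) ((hint a).const_mul _), integral_const_mul,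
        integral_const_mul, integral_sub (hint b) (integrable_const _), integral_const,
        probReal_univ, one_smul]

/-- With `t ^ a = ∫ x ^ a`, the gap `∫ x ^ (a + b) - ∫ x ^ a * ∫ x ^ b` is the integral of
`(x ^ a - t ^ a) * (x ^ b - t ^ b)`, which is nonnegative on `[0, 1]` and vanishes only at `t`. -/
lemma integral_pow_mul_integral_pow_lt {Q : Measure ℝ} [IsProbabilityMeasure Q]
    (hQ : ∀ᵐ x ∂Q, x ∈ Set.Icc (0 : ℝ) 1) (hnd : ¬ ∃ a : ℝ, Q = Measure.dirac a) {a b : ℕ}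
    (ha : a ≠ 0) (hb : b ≠ 0) :
    (∫ x, x ^ a ∂Q) * (∫ x, x ^ b ∂Q) < ∫ x, x ^ (a + b) ∂Q := by
  have hma := integral_pow_nonneg_of_ae_nonneg (hQ.mono fun _ hx ↦ hx.1) a
  set t := (∫ x, x ^ a ∂Q) ^ (a⁻¹ : ℝ)
  have ht : 0 ≤ t := Real.rpow_nonneg hma _
  have hta : t ^ a = ∫ x, x ^ a ∂Q := Real.rpow_inv_natCast_pow hma ha
  set f : ℝ → ℝ := fun x ↦ (x ^ a - t ^ a) * (x ^ b - t ^ b)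
  have hf_nonneg : 0 ≤ᵐ[Q] f := hQ.mono fun x hx ↦ mul_pow_sub_pow_nonneg hx.1 ht a b
  have hf_int : Integrable f Q := (by fun_prop : Continuous f).integrable_of_ae_mem_Icc hQ
  have hf_pos : 0 < ∫ x, f x ∂Q := by
    refine (integral_nonneg_of_ae hf_nonneg).lt_of_ne fun h ↦
      hnd ⟨t, Measure.eq_dirac_of_ae_eq ?_⟩
    filter_upwards [(integral_eq_zero_iff_of_nonneg_ae hf_nonneg hf_int).1 h.symm, hQ]
      with x hx hxI
    exact eq_of_mul_pow_sub_pow_eq_zero hxI.1 ht ha hb hx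
  rw [integral_mul_pow_sub_pow (fun k ↦ (continuous_pow k).integrable_of_ae_mem_Icc hQ),
    hta] at hf_pos
  linarith

lemma Matrix.det_updateRow_add_single {R : Type*} [CommRing R] {n : ℕ}
    (A : Matrix (Fin (n + 1)) (Fin (n + 1)) R) (i j : Fin (n + 1)) (c : R) :
    (A.updateRow i (A i + Pi.single j c)).det
      = A.det + (-1) ^ (i + j : ℕ) * c * (A.submatrix i.succAbove j.succAbove).det := by
  rw [det_updateRow_add, updateRow_eq_self, ← mul_one c, ← smul_eq_mul, Pi.single_smul',
    det_updateRow_smul, ← adjugate_apply, adjugate_fin_succ_eq_det_submatrix, smul_eq_mul]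
  ring

lemma det_Wgen_one (m γ : ℕ → ℝ) (sh st : ℕ) : (Wgen m γ sh st 1).det = m (sh + 1) := by
  simp [Wgen, add_comm]

lemma Wgen_submatrix_zero_succ (m γ : ℕ → ℝ) (sh st s : ℕ) :
    (Wgen m γ sh st (s + 2)).submatrix (Fin.succAbove 0) Fin.succ
      = Wgen m γ 0 (st + 1) (s + 1) := by
  ext i k
  simp only [Matrix.submatrix_apply, Fin.succAbove_zero, Wgen, Matrix.of_apply, Fin.val_succ,
    Nat.add_eq_zero_iff, one_ne_zero, and_false, if_false]
  split_ifs <;> first | rfl | omega | (congr 1; omega) | (congr 2; omega)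

lemma Wgen_submatrix_one_succ (m γ : ℕ → ℝ) (sh st s : ℕ) :
    (Wgen m γ sh st (s + 2)).submatrix (Fin.succAbove 1) Fin.succ
      = Wgen m γ (sh + 1) (st + 1) (s + 1) := by
  ext i k
  rw [Matrix.submatrix_apply, ← Fin.succ_zero_eq_one]
  rcases Fin.eq_zero_or_eq_succ i with rfl | ⟨i, rfl⟩
  · simp only [Fin.succ_succAbove_zero, Wgen, Matrix.of_apply, Fin.val_zero, Fin.val_succ, if_true]
    congr 1; omega
  · simp only [Fin.succ_succAbove_succ, Fin.succAbove_zero, Wgen, Matrix.of_apply, Fin.val_succ,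
      Nat.add_eq_zero_iff, one_ne_zero, and_false, if_false]
    split_ifs <;> first | rfl | omega | (congr 1; omega) | (congr 2; omega)

lemma det_Wgen_add_two (m γ : ℕ → ℝ) (sh st s : ℕ) :
    (Wgen m γ sh st (s + 2)).det
      = m (sh + 1) * (Wgen m γ 0 (st + 1) (s + 1)).det
        + γ st * (Wgen m γ (sh + 1) (st + 1) (s + 1)).det := by
  have hlow : ∀ i : Fin s, Wgen m γ sh st (s + 2) i.succ.succ 0 = 0 := fun i ↦ by
    simp [Wgen]
  rw [Matrix.det_succ_column_zero, Fin.sum_univ_succ, Fin.sum_univ_succ,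
    Finset.sum_eq_zero fun i _ ↦ by rw [hlow, mul_zero, zero_mul],
    Fin.succ_zero_eq_one, Wgen_submatrix_zero_succ, Wgen_submatrix_one_succ]
  have h00 : Wgen m γ sh st (s + 2) 0 0 = m (sh + 1) := by simp [Wgen, add_comm]
  have h10 : Wgen m γ sh st (s + 2) 1 0 = -γ st := by simp [Wgen]
  rw [h00, h10]
  simp

lemma Wgen_congr {m γ₁ γ₂ : ℕ → ℝ} {st : ℕ} (h : ∀ i, st ≤ i → γ₁ i = γ₂ i) (sh s : ℕ) :
    Wgen m γ₁ sh st s = Wgen m γ₂ sh st s := by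
  ext i k
  simp only [Wgen, Matrix.of_apply]
  split_ifs <;> first | rfl | rw [h _ (by omega)]

lemma Wgen_update_of_lt {j st : ℕ} (h : j < st) (m γ : ℕ → ℝ) (g : ℝ) (sh s : ℕ) :
    Wgen m (update γ j g) sh st s = Wgen m γ sh st s :=
  Wgen_congr (fun _ _ ↦ update_of_ne (by omega) _ _) sh s

variable {m γ : ℕ → ℝ}

lemma Wgen_update_apply_of_ne {j st s : ℕ} {i : Fin s} (hi : (i : ℕ) + st ≠ j + 1) (g : ℝ)
    (sh : ℕ) : Wgen m (update γ j g) sh st s i = Wgen m γ sh st s i := by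
  funext k
  simp only [Wgen, Matrix.of_apply]
  split_ifs <;> first | rfl | rw [update_of_ne (by omega)]

lemma Wgen_update_eq_updateRow {j st s : ℕ} (r c : Fin s) (hr : (r : ℕ) + st = j + 1)
    (hc : (c : ℕ) + 1 = r) (g : ℝ) (sh : ℕ) :
    Wgen m (update γ j g) sh st s = (Wgen m (update γ j 0) sh st s).updateRow r
      (Wgen m (update γ j 0) sh st s r + Pi.single c (-g)) := by
  ext i k
  by_cases hi : i = r
  · subst hi
    have hj : st + c = j := by omega
    simp only [Matrix.updateRow_self, Pi.add_apply, Pi.single_apply, Wgen, Matrix.of_apply,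
      Fin.ext_iff, ← hc]
    split_ifs <;> first | contradiction | omega | simp [hj]
  · rw [Matrix.updateRow_ne hi, Wgen_update_apply_of_ne, Wgen_update_apply_of_ne] <;>
      exact fun h ↦ hi (Fin.ext (by omega))

lemma det_Wgen_update {n j st : ℕ} (r c : Fin (n + 1)) (hr : (r : ℕ) + st = j + 1)
    (hc : (c : ℕ) + 1 = r) (g : ℝ) (sh : ℕ) :
    (Wgen m (update γ j g) sh st (n + 1)).det = (Wgen m (update γ j 0) sh st (n + 1)).det
      + g * ((Wgen m γ sh st (n + 1)).submatrix r.succAbove c.succAbove).det := by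
  have hminor : (Wgen m (update γ j 0) sh st (n + 1)).submatrix r.succAbove c.succAbove
      = (Wgen m γ sh st (n + 1)).submatrix r.succAbove c.succAbove := by
    ext i k
    rw [Matrix.submatrix_apply, Matrix.submatrix_apply, Wgen_update_apply_of_ne]
    exact fun h ↦ Fin.succAbove_ne r i (Fin.ext (by omega))
  have hsign : (-1 : ℝ) ^ ((r : ℕ) + c) = -1 := Odd.neg_one_pow ⟨c, by omega⟩
  rw [Wgen_update_eq_updateRow r c hr hc g, Matrix.det_updateRow_add_single, hminor, hsign]
  ring

lemma det_Wgen_nonneg (hm : ∀ k, 0 ≤ m k) (hγ : ∀ i, 0 ≤ γ i) (sh st s : ℕ) :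
    0 ≤ (Wgen m γ sh st s).det := by
  induction s using Nat.twoStepInduction generalizing sh st with
  | zero => simp
  | one => rw [det_Wgen_one]; exact hm _
  | more s _ ih =>
    rw [det_Wgen_add_two]
    have := ih 0 (st + 1)
    have := ih (sh + 1) (st + 1)
    have := hm (sh + 1)
    have := hγ st
    positivity

lemma det_Wgen_update_zero (sh p st q : ℕ) :
    (Wgen m (update γ (p + st) 0) sh st (p + q + 1)).det
      = (Wgen m γ sh st (p + 1)).det * (Wgen m γ 0 (p + st + 1) q).det := by
  induction p generalizing sh st with
  | zero =>
    rcases q with _ | q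
    · simp [Wgen]
    · rw [zero_add, zero_add, show q + 1 + 1 = q + 2 from rfl, det_Wgen_add_two, update_self,
        zero_mul, add_zero, Wgen_update_of_lt (by omega), det_Wgen_one]
  | succ p ih =>
    rw [show p + 1 + q + 1 = p + q + 2 by ring, show p + 1 + 1 = p + 2 from rfl,
      det_Wgen_add_two, det_Wgen_add_two, update_of_ne (by omega),
      show p + 1 + st = p + (st + 1) by ring, ih, ih]
    ring

section Strict

variable (hm : ∀ k, 0 ≤ m k) (hγ : ∀ i, 0 < γ i)
  (hch : ∀ a b, a ≠ 0 → b ≠ 0 → m a * m b < m (a + b))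
include hm hγ hch

lemma mul_det_Wgen_lt {a : ℕ} (ha : a ≠ 0) (b st : ℕ) {s : ℕ} (hs : s ≠ 0) :
    m a * (Wgen m γ b st s).det < (Wgen m γ (a + b) st s).det := by
  induction s using Nat.twoStepInduction generalizing b st with
  | zero => contradiction
  | one => rw [det_Wgen_one, det_Wgen_one, add_assoc]; exact hch a (b + 1) ha (by omega)
  | more s _ ih =>
    rw [det_Wgen_add_two, det_Wgen_add_two, add_assoc a b 1]
    linarith [mul_le_mul_of_nonneg_right (hch a (b + 1) ha (by omega)).le
      (det_Wgen_nonneg hm (fun i ↦ (hγ i).le) 0 (st + 1) (s + 1)),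
      mul_lt_mul_of_pos_left (ih (b + 1) (st + 1) (by omega)) (hγ st)]

lemma two_mul_det_Wgen_update_zero_lt (sh p st q : ℕ) :
    2 * (Wgen m (update γ (p + st) 0) sh st (p + q + 2)).det
      < (Wgen m (update γ (p + st) 1) sh st (p + q + 2)).det := by
  induction p generalizing sh st with
  | zero =>
    rw [zero_add, zero_add, det_Wgen_add_two, det_Wgen_add_two, update_self, update_self,
      Wgen_update_of_lt (lt_add_one st), Wgen_update_of_lt (lt_add_one st),
      Wgen_update_of_lt (lt_add_one st), Wgen_update_of_lt (lt_add_one st)]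
    have := mul_det_Wgen_lt hm hγ hch (a := sh + 1) (by omega) 0 (st + 1) (s := q + 1) (by omega)
    rw [add_zero] at this
    linarith
  | succ p ih =>
    have hst : st ≠ p + 1 + st := by omega
    rw [show p + 1 + q + 2 = p + q + 1 + 2 by ring, det_Wgen_add_two m _ sh st,
      det_Wgen_add_two m _ sh st, update_of_ne hst, update_of_ne hst,
      show p + 1 + st = p + (st + 1) by ring]
    linarith [mul_le_mul_of_nonneg_left (ih 0 (st + 1)).le (hm (sh + 1)),
      mul_lt_mul_of_pos_left (ih (sh + 1) (st + 1)) (hγ st)]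

end Strict

/-- Strict Hessenberg determinant inequality: for the moment matrices of a non-Dirac
probability measure on `[0,1]`, `det(W^{j-1}) · det(W^{j+1,n}) < d det(W^n)/dγ_j`, where
the derivative equals the determinant of `W^n` with the row and column containing `-γ_j`
deleted. -/
theorem stmt11 (Q : Measure ℝ) [IsProbabilityMeasure Q] (hQsupp : Q (Set.Icc 0 1) = 1)
    (hnd : ¬ ∃ a : ℝ, Q = Measure.dirac a)
    (m : ℕ → ℝ) (hm : ∀ k, m k = ∫ x, x ^ k ∂Q)
    (γ : ℕ → ℝ) (hγ : ∀ i, 0 < γ i)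
    (n j : ℕ) (hj1 : 1 ≤ j) (hjn : j ≤ n) :
    let D : ℝ := ((Wgen m γ 0 1 (n + 1)).submatrix
        (Fin.succAbove ⟨j, by omega⟩) (Fin.succAbove ⟨j - 1, by omega⟩)).det
    HasDerivAt (fun g : ℝ => (Wgen m (Function.update γ j g) 0 1 (n + 1)).det) D (γ j) ∧
    (Wgen m γ 0 1 j).det * (Wgen m γ 0 (j + 1) (n - j + 1)).det < D := by
  intro D
  have hQ : ∀ᵐ x ∂Q, x ∈ Set.Icc (0 : ℝ) 1 :=
    (ae_mem_iff_measure_eq measurableSet_Icc.nullMeasurableSet).2 (by rw [hQsupp, measure_univ])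
  have hm_nonneg : ∀ k, 0 ≤ m k := fun k ↦
    hm k ▸ integral_pow_nonneg_of_ae_nonneg (hQ.mono fun _ hx ↦ hx.1) k
  have hch : ∀ a b, a ≠ 0 → b ≠ 0 → m a * m b < m (a + b) := fun a b ha hb ↦ by
    simpa only [hm] using integral_pow_mul_integral_pow_lt hQ hnd ha hb
  have haffine : ∀ g, (Wgen m (update γ j g) 0 1 (n + 1)).det
      = (Wgen m (update γ j 0) 0 1 (n + 1)).det + g * D := fun g ↦
    det_Wgen_update ⟨j, by omega⟩ ⟨j - 1, by omega⟩ rfl (by simp only; omega) g 0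
  refine ⟨?_, ?_⟩
  · rw [funext haffine]
    simpa using ((hasDerivAt_id (γ j)).mul_const D).const_add
      (Wgen m (update γ j 0) 0 1 (n + 1)).det
  · have hblock := det_Wgen_update_zero (m := m) (γ := γ) 0 (j - 1) 1 (n - j + 1)
    have hlt := two_mul_det_Wgen_update_zero_lt hm_nonneg hγ hch 0 (j - 1) 1 (n - j)
    rw [Nat.sub_add_cancel hj1, show j - 1 + (n - j + 1) + 1 = n + 1 by omega] at hblock
    rw [Nat.sub_add_cancel hj1, show j - 1 + (n - j) + 2 = n + 1 by omega] at hlt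
    rw [← hblock]
    linarith [haffine 1]
end

section
/- Define L_{j,n} = det(W^{j+1,n})/det(W^{j,n}) and R^n_{j+1} = det(U^r W^{j+1,n})/det(W^{j+1,n}). Then L_{j,n} = 1/(m₁ + γ_j R^n_{j+1}), and consequently γ_j/(m₁ + γ_j) < γ_j L_{j,n} < γ_j/(m₁(1 + γ_j)) whenever m₁ < R^n_{j+1} < 1. -/
/-!
Expanding `det W^{j,n}` along its first column, only the entries `m₁` and `-γ_j` survive, and
their minors are `W^{j+1,n}` and `U^r W^{j+1,n}`; hence
`det W^{j,n} = m₁ det W^{j+1,n} + γ_j det U^r W^{j+1,n}`, which is the identity after dividing by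
`det W^{j+1,n}`. The same recurrence shows by induction that all these determinants are positive,
because all moments `m_{k+1}` of a measure on `[0,1]` with `m₁ > 0` are. The bounds then say that
`γ/(m₁ + γR)` is decreasing in `R`, evaluated at `R = 1` and `R = m₁`.
-/

open MeasureTheory

section Moments

variable {Q : Measure ℝ} [IsFiniteMeasure Q]

lemma integrable_pow_of_ae_mem_Icc (h01 : ∀ᵐ x ∂Q, x ∈ Set.Icc (0 : ℝ) 1) (n : ℕ) :
    Integrable (fun x : ℝ => x ^ n) Q := by
  refine (integrable_const (1 : ℝ)).mono' (continuous_pow n).aestronglyMeasurable ?_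
  filter_upwards [h01] with x hx
  rw [Real.norm_eq_abs, abs_pow]
  exact pow_le_one₀ (abs_nonneg x) (abs_le.2 ⟨by linarith [hx.1], hx.2⟩)

/-- Each moment `∫ x ^ (k + 1)` is positive iff `Q` charges `{x ≠ 0}`. -/
lemma integral_pow_succ_pos (h01 : ∀ᵐ x ∂Q, x ∈ Set.Icc (0 : ℝ) 1)
    (h : 0 < ∫ x, x ∂Q) (k : ℕ) : 0 < ∫ x, x ^ (k + 1) ∂Q := by
  have hnn : ∀ n : ℕ, 0 ≤ᵐ[Q] fun x : ℝ => x ^ n := fun n => by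
    filter_upwards [h01] with x hx
    exact pow_nonneg hx.1 n
  rw [integral_pos_iff_support_of_nonneg_ae (hnn _) (integrable_pow_of_ae_mem_Icc h01 _),
    Function.support_pow _ k.succ_ne_zero]
  simpa using (integral_pos_iff_support_of_nonneg_ae (hnn 1)
    (integrable_pow_of_ae_mem_Icc h01 1)).1 (by simpa using h)

end Moments

namespace Wgen

variable (m γ : ℕ → ℝ) (σ st s : ℕ)

lemma submatrix_succAbove_zero :
    (Wgen m γ σ st (s + 2)).submatrix (Fin.succAbove 0) Fin.succ = Wgen m γ 0 (st + 1) (s + 1) := by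
  ext i k
  simp only [Matrix.submatrix_apply, Wgen, Matrix.of_apply, Fin.succAbove_zero, Fin.val_succ]
  split_ifs <;> first | rfl | contradiction | omega | (congr 1; omega) | (congr 2; omega)

lemma submatrix_succAbove_one :
    (Wgen m γ σ st (s + 2)).submatrix (Fin.succAbove 1) Fin.succ =
      Wgen m γ (σ + 1) (st + 1) (s + 1) := by
  ext i k
  refine Fin.cases ?_ (fun i => ?_) i
  · simp [Wgen, add_comm σ 1, add_assoc]
  simp only [Matrix.submatrix_apply, Wgen, Matrix.of_apply, Fin.one_succAbove_succ, Fin.val_succ]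
  split_ifs <;> first | rfl | contradiction | omega | (congr 1; omega) | (congr 2; omega)

lemma apply_succ_succ_zero (i : Fin s) : Wgen m γ σ st (s + 2) i.succ.succ 0 = 0 := by
  simp [Wgen]

lemma det_succ_succ :
    (Wgen m γ σ st (s + 2)).det =
      m (σ + 1) * (Wgen m γ 0 (st + 1) (s + 1)).det +
        γ st * (Wgen m γ (σ + 1) (st + 1) (s + 1)).det := by
  rw [Matrix.det_succ_column_zero, Fin.sum_univ_succ, Fin.sum_univ_succ]
  simp only [apply_succ_succ_zero, mul_zero, zero_mul, Finset.sum_const_zero, add_zero]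
  rw [show (Fin.succ 0 : Fin (s + 2)) = 1 from rfl, submatrix_succAbove_zero,
    submatrix_succAbove_one]
  simp [Wgen, add_comm 1 σ]

lemma det_pos {m γ : ℕ → ℝ} (hm : ∀ k, 0 < m (k + 1)) (hγ : ∀ i, 0 < γ i) :
    ∀ s σ st, 0 < (Wgen m γ σ st s).det
  | 0, _, _ => by simp
  | 1, σ, _ => by simpa [Wgen, Matrix.det_fin_one, add_comm 1 σ] using hm σ
  | s + 2, σ, st => by
    rw [det_succ_succ]
    have := det_pos hm hγ (s + 1) 0 (st + 1)
    have := det_pos hm hγ (s + 1) (σ + 1) (st + 1)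
    have := hm σ
    have := hγ st
    positivity

end Wgen

lemma div_add_mul_bounds {a g R : ℝ} (ha : 0 < a) (hg : 0 < g) (haR : a < R) (hR1 : R < 1) :
    g / (a + g) < g / (a + g * R) ∧ g / (a + g * R) < g / (a * (1 + g)) := by
  have hgR : g * R < g := by nlinarith
  have haR' : a * g < g * R := by nlinarith
  constructor <;> apply div_lt_div_of_pos_left hg <;> nlinarith

theorem stmt13_general (Q : Measure ℝ) [IsProbabilityMeasure Q] (hQsupp : Q (Set.Icc 0 1) = 1)
    (m : ℕ → ℝ) (hm : ∀ k, m k = ∫ x, x ^ k ∂Q)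
    (hm1 : m 1 ∈ Set.Ioo (0 : ℝ) 1)
    (γ : ℕ → ℝ) (hγ : ∀ i, 0 < γ i)
    (j s : ℕ) :
    let R : ℝ := (Wgen m γ 1 (j + 1) (s + 1)).det / (Wgen m γ 0 (j + 1) (s + 1)).det
    let L : ℝ := (Wgen m γ 0 (j + 1) (s + 1)).det / (Wgen m γ 0 j (s + 2)).det
    L = 1 / (m 1 + γ j * R) ∧
    (m 1 < R → R < 1 →
      γ j / (m 1 + γ j) < γ j * L ∧ γ j * L < γ j / (m 1 * (1 + γ j))) := by
  intro R L
  have h01 : ∀ᵐ x ∂Q, x ∈ Set.Icc (0 : ℝ) 1 := (mem_ae_iff_prob_eq_one measurableSet_Icc).2 hQsupp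
  have hmpos : ∀ k, 0 < m (k + 1) := fun k => by
    rw [hm]
    exact integral_pow_succ_pos h01 (by simpa [hm] using hm1.1) k
  have hW_pos := Wgen.det_pos hmpos hγ (s + 1) 0 (j + 1)
  have hL : L = 1 / (m 1 + γ j * R) := by
    simp only [L, R, Wgen.det_succ_succ]
    field_simp
  refine ⟨hL, fun hR_gt hR_lt => ?_⟩
  rw [hL, mul_one_div]
  exact div_add_mul_bounds hm1.1 (hγ j) hR_gt hR_lt

/-- `L_{j,n} = det(W^{j+1,n})/det(W^{j,n})` equals `1/(m₁ + γ_j Rⁿ_{j+1})`, and whenever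
`m₁ < Rⁿ_{j+1} < 1` one has `γ_j/(m₁+γ_j) < γ_j L_{j,n} < γ_j/(m₁(1+γ_j))`.
Here `W^{j,n}` has size `s+2` and `W^{j+1,n}` has size `s+1`. -/
theorem stmt13 (Q : Measure ℝ) [IsProbabilityMeasure Q] (hQsupp : Q (Set.Icc 0 1) = 1)
    (m : ℕ → ℝ) (hm : ∀ k, m k = ∫ x, x ^ k ∂Q)
    (hm1 : m 1 ∈ Set.Ioo (0 : ℝ) 1)
    (γ : ℕ → ℝ) (hγ : ∀ i, 0 < γ i)
    (j s : ℕ) (hj : 1 ≤ j) :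
    let R : ℝ := (Wgen m γ 1 (j + 1) (s + 1)).det / (Wgen m γ 0 (j + 1) (s + 1)).det
    let L : ℝ := (Wgen m γ 0 (j + 1) (s + 1)).det / (Wgen m γ 0 j (s + 2)).det
    L = 1 / (m 1 + γ j * R) ∧
    (m 1 < R → R < 1 →
      γ j / (m 1 + γ j) < γ j * L ∧ γ j * L < γ j / (m 1 * (1 + γ j))) :=
  stmt13_general Q hQsupp m hm hm1 γ hγ j s
end
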